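/- Let f : ℂ → ℂ be an entire transcendental function, let z0 be a repelling or parabolic fixed point of f, and let U be an admissible expansion domain of f at z0. Then for every leg γ there exists exactly one leg β such that f(β(t)) = γ(t) for all t ∈ [0,∞). (Thus the leg map 𝓛, sending each leg to its unique pullback ending at z0, is well defined.) -/

import Mathlib

open Complex Set Filter Topology

noncomputable section

/-- `f` is an entire transcendental function: holomorphic on all of `ℂ` and not a polynomial. -/
def EntireTranscendental (f : ℂ → ℂ) : Prop :=
  Differentiable ℂ f ∧ ¬ ∃ p : Polynomial ℂ, ∀ z : ℂ, f z = p.eval z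

/-- `w` is a critical value of `f`. -/
def IsCriticalValue (f : ℂ → ℂ) (w : ℂ) : Prop :=
  ∃ c : ℂ, deriv f c = 0 ∧ f c = w

/-- `a` is an asymptotic value of `f`. -/
def IsAsymptoticValue (f : ℂ → ℂ) (a : ℂ) : Prop :=
  ∃ γ : ℝ → ℂ, ContinuousOn γ (Ici 0) ∧
    Tendsto (fun t => ‖γ t‖) atTop atTop ∧
    Tendsto (fun t => f (γ t)) atTop (nhds a)

/-- The set of singular values `S(f)`. -/
def singularValues (f : ℂ → ℂ) : Set ℂ :=
  closure ({w | IsCriticalValue f w} ∪ {a | IsAsymptoticValue f a})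

/-- The postsingular set `P(f)`. -/
def postsingularSet (f : ℂ → ℂ) : Set ℂ :=
  closure (⋃ n : ℕ, f^[n] '' singularValues f)

/-- `f` has finite order of growth. -/
def FiniteOrder (f : ℂ → ℂ) : Prop :=
  ∃ C R : ℝ, 0 < C ∧ 0 < R ∧ ∀ z : ℂ, R ≤ ‖z‖ →
    ‖f z‖ ≤ Real.exp (‖z‖ ^ C)

/-- `z` is a repelling or parabolic periodic point of `f`. -/
def RepellingOrParabolicPeriodicPt (f : ℂ → ℂ) (z : ℂ) : Prop :=
  ∃ n : ℕ, 1 ≤ n ∧ f^[n] z = z ∧ (∀ m : ℕ, 1 ≤ m → m < n → f^[m] z ≠ z) ∧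
    (1 < ‖deriv (f^[n]) z‖ ∨ ∃ k : ℕ, 1 ≤ k ∧ (deriv (f^[n]) z) ^ k = 1)

/-- `g : (0,∞) → ℂ` is a periodic ray of `f`. -/
def IsPeriodicRay (f : ℂ → ℂ) (g : ℝ → ℂ) : Prop :=
  InjOn g (Ioi 0) ∧ ContinuousOn g (Ioi 0) ∧
  Tendsto (fun t => ‖g t‖) atTop atTop ∧
  ∃ n : ℕ, 1 ≤ n ∧ ∀ t : ℝ, 0 < t → g (2 * t) = f^[n] (g t)

/-- The curve `g` lands at `z0`. -/
def LandsAt (g : ℝ → ℂ) (z0 : ℂ) : Prop :=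
  Tendsto g (nhdsWithin 0 (Ioi 0)) (nhds z0)

/-- `z0` is a repelling or parabolic fixed point of `f`. -/
def RepellingOrParabolicFixedPt (f : ℂ → ℂ) (z0 : ℂ) : Prop :=
  f z0 = z0 ∧ (1 < ‖deriv f z0‖ ∨ ∃ k : ℕ, 1 ≤ k ∧ (deriv f z0) ^ k = 1)

/-- `U` is an admissible expansion domain of `f` at the fixed point `z0`. -/
def IsAdmissibleExpansionDomain (f : ℂ → ℂ) (z0 : ℂ) (U : Set ℂ) : Prop :=
  IsOpen U ∧ IsConnected U ∧
  -- (a): U avoids P(f) and z0, and ∞ is an isolated boundary point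
  U ⊆ (postsingularSet f ∪ {z0})ᶜ ∧
  (∃ R : ℝ, 0 < R ∧ ∀ z : ℂ, R < ‖z‖ → z ∈ U) ∧
  -- (b): strict backward invariance
  f ⁻¹' U ⊂ U ∧
  -- (c): finitely many complementary components, and U ≠ ℂ ∖ P(f)
  {C : Set ℂ | ∃ z : ℂ, z ∉ U ∧ C = connectedComponentIn Uᶜ z}.Finite ∧
  U ≠ (postsingularSet f)ᶜ ∧
  -- (d): z0 is an accessible boundary point, and K0 ∖ {z0} has finitely many components
  z0 ∈ frontier U ∧
  (∃ α : ℝ → ℂ, ContinuousOn α (Icc 0 1) ∧ (∀ t ∈ Ico (0:ℝ) 1, α t ∈ U) ∧ α 1 = z0) ∧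
  {C : Set ℂ | ∃ z : ℂ, z ∈ connectedComponentIn Uᶜ z0 \ {z0} ∧
      C = connectedComponentIn (connectedComponentIn Uᶜ z0 \ {z0}) z}.Finite

/-- A leg: an injective curve from `z0` to `∞` through `U`. -/
def IsLeg (z0 : ℂ) (U : Set ℂ) (γ : ℝ → ℂ) : Prop :=
  ContinuousOn γ (Ici 0) ∧ InjOn γ (Ici 0) ∧ γ 0 = z0 ∧
  (∀ t : ℝ, 0 < t → γ t ∈ U) ∧ Tendsto (fun t => ‖γ t‖) atTop atTop

/-- Two legs are equivalent if they are homotopic in `U` relative to `{z0, ∞}`. -/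
def LegEquiv (z0 : ℂ) (U : Set ℂ) (γ1 γ2 : ℝ → ℂ) : Prop :=
  ∃ H : ℝ × ℝ → ℂ, ContinuousOn H (Icc 0 1 ×ˢ Ici 0) ∧
    (∀ t ∈ Ici (0:ℝ), H (0, t) = γ1 t ∧ H (1, t) = γ2 t) ∧
    (∀ s ∈ Icc (0:ℝ) 1, H (s, 0) = z0) ∧
    (∀ s ∈ Icc (0:ℝ) 1, ∀ t : ℝ, 0 < t → H (s, t) ∈ U) ∧
    (∀ M : ℝ, ∃ T : ℝ, ∀ t : ℝ, T ≤ t → ∀ s ∈ Icc (0:ℝ) 1, M ≤ ‖H (s, t)‖)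

/-!
For `t > 0` the point `γ t` lies in `U`, hence off the postsingular set, so it is neither a
critical nor an asymptotic value; and `f'(z₀) ≠ 0` since `z₀` is repelling or parabolic.
Thus `f` is a local homeomorphism at every point over the leg, which makes lifts starting at
`z₀` unique and lets them be continued through local inverses. A lift on `[0, T)` which cannot
be continued to `T` must escape to `∞`, which would make `γ T` an asymptotic value; otherwise it
has a finite cluster point over `γ T`, and the local inverse there continues it past `T`.
The lift is a leg because `f⁻¹(U) ⊆ U`, `γ` is injective and `f` is bounded on compact sets.
-/

lemma eqOn_of_comp_eqOn_of_injOn {A X Y : Type*} [TopologicalSpace A] [TopologicalSpace X]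
    [T2Space X] {f : X → Y} {b₁ b₂ : A → X} {D : Set A} (hD : IsPreconnected D)
    (h₁ : ContinuousOn b₁ D) (h₂ : ContinuousOn b₂ D) (he : EqOn (f ∘ b₁) (f ∘ b₂) D)
    (hinj : ∀ t ∈ D, ∃ V ∈ 𝓝 (b₁ t), InjOn f V) {t₀ : A} (ht₀ : t₀ ∈ D)
    (h₀ : b₁ t₀ = b₂ t₀) : EqOn b₁ b₂ D := by
  rw [isPreconnected_iff_preconnectedSpace] at hD
  rw [continuousOn_iff_continuous_domRestrict] at h₁ h₂
  have hclosed : IsClosed {t : D | b₁ t = b₂ t} := isClosed_eq h₁ h₂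
  have hopen : IsOpen {t : D | b₁ t = b₂ t} := by
    refine isOpen_iff_mem_nhds.2 fun t (ht : b₁ t = b₂ t) => ?_
    obtain ⟨V, hV, hfV⟩ := hinj t t.2
    have hV₂ : V ∈ 𝓝 (b₂ t) := ht ▸ hV
    filter_upwards [h₁.continuousAt.preimage_mem_nhds hV, h₂.continuousAt.preimage_mem_nhds hV₂]
      with s hs₁ hs₂ using hfV hs₁ hs₂ (he s.2)
  have huniv := IsClopen.eq_univ ⟨hclosed, hopen⟩ ⟨⟨t₀, ht₀⟩, h₀⟩
  exact fun t ht => eq_univ_iff_forall.1 huniv ⟨t, ht⟩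

lemma continuousOn_Icc_ite {X : Type*} [TopologicalSpace X] {a s u : ℝ} {g₁ g₂ : ℝ → X}
    (h₁ : ContinuousOn g₁ (Icc a s)) (h₂ : ContinuousOn g₂ (Icc s u)) (hs : g₁ s = g₂ s) :
    ContinuousOn (fun t => if t ≤ s then g₁ t else g₂ t) (Icc a u) := by
  refine ContinuousOn.mono ?_ (Icc_subset_Icc_union_Icc (b := s))
  refine (h₁.congr fun t ht => if_pos ht.2).union_of_isClosed
    (h₂.congr fun t ht => ?_) isClosed_Icc isClosed_Icc
  split_ifs with h
  · rw [le_antisymm h ht.1, hs]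
  · rfl

lemma exists_mapClusterPt_of_not_tendsto_norm_atTop {α E : Type*} [NormedAddCommGroup E]
    [ProperSpace E] {l : Filter α} {u : α → E} (h : ¬ Tendsto (fun a => ‖u a‖) l atTop) :
    ∃ w, MapClusterPt w l u := by
  rw [tendsto_atTop] at h
  push Not at h
  obtain ⟨M, hM⟩ := h
  obtain ⟨w, -, hw⟩ := (isCompact_closedBall (0 : E) M).exists_mapClusterPt_of_frequently
    (hM.mono fun a ha => by simpa using ha.le)
  exact ⟨w, hw⟩

lemma tendsto_norm_atTop_of_tendsto_norm_comp {α E F : Type*} [NormedAddCommGroup E]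
    [ProperSpace E] [NormedAddCommGroup F] [ProperSpace F] {l : Filter α} {f : E → F} {u : α → E}
    (hf : Continuous f) (h : Tendsto (fun a => ‖f (u a)‖) l atTop) :
    Tendsto (fun a => ‖u a‖) l atTop := by
  rw [tendsto_norm_atTop_iff_cobounded, Metric.cobounded_eq_cocompact] at h ⊢
  exact h.of_tendsto_comp (comap_cocompact_le hf)

lemma exists_openPartialHomeomorph_eq {f : ℂ → ℂ} {w : ℂ} (hf : AnalyticAt ℂ f w)
    (hw : deriv f w ≠ 0) : ∃ e : OpenPartialHomeomorph ℂ ℂ, w ∈ e.source ∧ ⇑e = f := by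
  have hE := hf.hasStrictDerivAt.hasStrictFDerivAt_equiv hw
  exact ⟨hE.toOpenPartialHomeomorph f, hE.mem_toOpenPartialHomeomorph_source,
    hE.toOpenPartialHomeomorph_coe⟩

lemma exists_local_lift {f : ℂ → ℂ} {γ : ℝ → ℂ} {w : ℂ} {T : ℝ} (hf : AnalyticAt ℂ f w)
    (hγ : Continuous γ) (hwT : f w = γ T) (hw : deriv f w ≠ 0) :
    ∃ V ∈ 𝓝 w, ∃ ε > 0, ∃ c : ℝ → ℂ, ContinuousOn c (Icc (T - ε) (T + ε)) ∧
      ∀ t ∈ Icc (T - ε) (T + ε), f (c t) = γ t ∧ ∀ z ∈ V, f z = γ t → c t = z := by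
  obtain ⟨e, hwe, hef⟩ := exists_openPartialHomeomorph_eq hf hw
  have hγT : γ T ∈ e.target := by rw [← hwT, ← hef]; exact e.map_source hwe
  obtain ⟨ε, hε, hball⟩ := Metric.nhds_basis_closedBall.mem_iff.1
    (hγ.continuousAt.preimage_mem_nhds (e.open_target.mem_nhds hγT))
  rw [Real.closedBall_eq_Icc] at hball
  refine ⟨e.source, e.open_source.mem_nhds hwe, ε, hε, e.symm ∘ γ,
    e.continuousOn_symm.comp hγ.continuousOn hball, fun t ht => ⟨?_, fun z hz hfz => ?_⟩⟩
  · rw [← hef]; exact e.right_inv (hball ht)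
  · rw [Function.comp_apply, ← hfz, ← hef, e.left_inv hz]

lemma isAsymptoticValue_of_tendsto_nhdsLT {f : ℂ → ℂ} {B : ℝ → ℂ} {T : ℝ} {a : ℂ} (hT : 0 < T)
    (hB : ContinuousOn B (Ico 0 T)) (hesc : Tendsto (fun t => ‖B t‖) (𝓝[<] T) atTop)
    (hfB : Tendsto (fun t => f (B t)) (𝓝[<] T) (𝓝 a)) : IsAsymptoticValue f a := by
  set φ : ℝ → ℝ := fun s => T * (1 - Real.exp (-s))
  have hφ : MapsTo φ (Ici 0) (Ico 0 T) := fun s (hs : 0 ≤ s) =>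
    ⟨mul_nonneg hT.le (sub_nonneg.2 (Real.exp_le_one_iff.2 (neg_nonpos.2 hs))),
      mul_lt_of_lt_one_right hT (sub_lt_self _ (Real.exp_pos _))⟩
  have hφlim : Tendsto φ atTop (𝓝[<] T) := by
    refine tendsto_nhdsWithin_iff.2 ⟨?_, (eventually_ge_atTop 0).mono fun s hs => (hφ hs).2⟩
    simpa using (Real.tendsto_exp_neg_atTop_nhds_zero.const_sub 1).const_mul T
  exact ⟨B ∘ φ, hB.comp (by fun_prop) hφ, hesc.comp hφlim, hfB.comp hφlim⟩

lemma singularValues_subset_postsingularSet (f : ℂ → ℂ) :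
    singularValues f ⊆ postsingularSet f :=
  fun _ hx => subset_closure (mem_iUnion.2 ⟨0, by simpa using hx⟩)

lemma deriv_ne_zero_of_notMem_singularValues {f : ℂ → ℂ} {w : ℂ}
    (h : f w ∉ singularValues f) : deriv f w ≠ 0 :=
  fun h0 => h (subset_closure (Or.inl ⟨w, h0, rfl⟩))

lemma not_isAsymptoticValue_of_notMem_singularValues {f : ℂ → ℂ} {a : ℂ}
    (h : a ∉ singularValues f) : ¬ IsAsymptoticValue f a :=
  fun ha => h (subset_closure (Or.inr ha))

lemma RepellingOrParabolicFixedPt.deriv_ne_zero {f : ℂ → ℂ} {z₀ : ℂ}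
    (hz : RepellingOrParabolicFixedPt f z₀) : deriv f z₀ ≠ 0 := by
  rintro h0
  rcases hz.2 with h | ⟨k, hk, hpow⟩
  · simp [h0] at h; linarith
  · rw [h0, zero_pow (by omega)] at hpow
    exact zero_ne_one hpow

def IsLiftOn (f : ℂ → ℂ) (γ : ℝ → ℂ) (z₀ : ℂ) (I : Set ℝ) (b : ℝ → ℂ) : Prop :=
  ContinuousOn b I ∧ b 0 = z₀ ∧ ∀ t ∈ I, f (b t) = γ t

namespace IsLiftOn

variable {f : ℂ → ℂ} {γ : ℝ → ℂ} {z₀ : ℂ} {I : Set ℝ} {b : ℝ → ℂ}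

lemma mono {J : Set ℝ} (hb : IsLiftOn f γ z₀ I b) (hJI : J ⊆ I) : IsLiftOn f γ z₀ J b :=
  ⟨hb.1.mono hJI, hb.2.1, fun t ht => hb.2.2 t (hJI ht)⟩

lemma deriv_ne_zero (hz₀ : deriv f z₀ ≠ 0) (hsing : ∀ t > 0, γ t ∉ singularValues f)
    (hb : IsLiftOn f γ z₀ I b) (hI : I ⊆ Ici 0) {t : ℝ} (ht : t ∈ I) : deriv f (b t) ≠ 0 := by
  rcases (mem_Ici.1 (hI ht)).eq_or_lt with h | h
  · rwa [← h, hb.2.1]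
  · exact deriv_ne_zero_of_notMem_singularValues (hb.2.2 t ht ▸ hsing t h)

lemma eqOn (hf : Differentiable ℂ f) (hz₀ : deriv f z₀ ≠ 0)
    (hsing : ∀ t > 0, γ t ∉ singularValues f) (hI : IsPreconnected I) (hI₀ : 0 ∈ I)
    (hIpos : I ⊆ Ici 0) {b' : ℝ → ℂ} (hb : IsLiftOn f γ z₀ I b) (hb' : IsLiftOn f γ z₀ I b') :
    EqOn b b' I := by
  refine eqOn_of_comp_eqOn_of_injOn hI hb.1 hb'.1
    (fun t ht => (hb.2.2 t ht).trans (hb'.2.2 t ht).symm) (fun t ht => ?_) hI₀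
    (hb.2.1.trans hb'.2.1.symm)
  obtain ⟨e, hes, hef⟩ :=
    exists_openPartialHomeomorph_eq (hf.analyticAt _) (hb.deriv_ne_zero hz₀ hsing hIpos ht)
  exact ⟨e.source, e.open_source.mem_nhds hes, hef ▸ e.injOn⟩

lemma glue {s u : ℝ} {c : ℝ → ℂ} (hb : IsLiftOn f γ z₀ (Icc 0 s) b) (hs : 0 ≤ s)
    (hc : ContinuousOn c (Icc s u)) (hcγ : ∀ t ∈ Icc s u, f (c t) = γ t) (hbc : b s = c s) :
    IsLiftOn f γ z₀ (Icc 0 u) (fun t => if t ≤ s then b t else c t) := by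
  refine ⟨continuousOn_Icc_ite hb.1 hc hbc, by simp [hs, hb.2.1], fun t ht => ?_⟩
  dsimp only
  split_ifs with h
  · exact hb.2.2 t ⟨ht.1, h⟩
  · exact hcγ t ⟨(not_le.1 h).le, ht.2⟩

lemma exists_extend (hf : Differentiable ℂ f) (hγ : Continuous γ) (hz₀ : deriv f z₀ ≠ 0)
    (hsing : ∀ t > 0, γ t ∉ singularValues f) {T : ℝ} (hT : 0 ≤ T)
    (hb : IsLiftOn f γ z₀ (Icc 0 T) b) : ∃ u > T, ∃ b', IsLiftOn f γ z₀ (Icc 0 u) b' := by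
  have hTmem : T ∈ Icc 0 T := ⟨hT, le_rfl⟩
  obtain ⟨V, hV, ε, hε, c, hc, hcγ⟩ := exists_local_lift (hf.analyticAt _) hγ (hb.2.2 T hTmem)
    (hb.deriv_ne_zero hz₀ hsing Icc_subset_Ici_self hTmem)
  have hwindow : Icc T (T + ε) ⊆ Icc (T - ε) (T + ε) := Icc_subset_Icc (by linarith) le_rfl
  have hcT : c T = b T :=
    (hcγ T (hwindow ⟨le_rfl, by linarith⟩)).2 _ (mem_of_mem_nhds hV) (hb.2.2 T hTmem)
  exact ⟨T + ε, by linarith, _,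
    hb.glue hT (hc.mono hwindow) (fun t ht => (hcγ t (hwindow ht)).1) hcT.symm⟩

lemma exists_extend_endpoint (hf : Differentiable ℂ f) (hγ : Continuous γ)
    (hsing : ∀ t > 0, γ t ∉ singularValues f) {T : ℝ} (hT : 0 < T)
    (hb : IsLiftOn f γ z₀ (Ico 0 T) b) : ∃ b', IsLiftOn f γ z₀ (Icc 0 T) b' := by
  have hfb : Tendsto (fun t => f (b t)) (𝓝[<] T) (𝓝 (γ T)) :=
    (hγ.continuousAt.mono_left nhdsWithin_le_nhds).congr'
      (eventually_mem_set.2 (Ico_mem_nhdsLT hT) |>.mono fun t ht => (hb.2.2 t ht).symm)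
  by_cases hesc : Tendsto (fun t => ‖b t‖) (𝓝[<] T) atTop
  · exact absurd (isAsymptoticValue_of_tendsto_nhdsLT hT hb.1 hesc hfb)
      (not_isAsymptoticValue_of_notMem_singularValues (hsing T hT))
  obtain ⟨w, hw⟩ := exists_mapClusterPt_of_not_tendsto_norm_atTop hesc
  have hfw : f w = γ T := eq_of_nhds_neBot (ClusterPt.mono (hw.tendsto_comp (hf.continuous.tendsto w)) hfb)
  obtain ⟨V, hV, ε, hε, c, hc, hcγ⟩ := exists_local_lift (hf.analyticAt w) hγ hfw
    (deriv_ne_zero_of_notMem_singularValues (hfw ▸ hsing T hT))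
  obtain ⟨s, hsV, hs⟩ := ((mapClusterPt_iff_frequently.1 hw V hV).and_eventually
    (Ioo_mem_nhdsLT (max_lt hT (by linarith : T - ε < T)))).exists
  have hs₀ : 0 ≤ s := (le_max_left _ _).trans hs.1.le
  have hwindow : Icc s T ⊆ Icc (T - ε) (T + ε) :=
    Icc_subset_Icc ((le_max_right _ _).trans hs.1.le) (by linarith)
  have hcs : c s = b s :=
    (hcγ s (hwindow ⟨le_rfl, hs.2.le⟩)).2 _ hsV (hb.2.2 s ⟨hs₀, hs.2⟩)
  exact ⟨_, (hb.mono (Icc_subset_Ico_right hs.2)).glue hs₀ (hc.mono hwindow)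
    (fun t ht => (hcγ t (hwindow ht)).1) hcs.symm⟩

lemma exists_of_forall_Icc (hf : Differentiable ℂ f) (hz₀ : deriv f z₀ ≠ 0)
    (hsing : ∀ t > 0, γ t ∉ singularValues f) (hI : I.OrdConnected) (hI₀ : 0 ∈ I)
    (hIpos : I ⊆ Ici 0) (hmax : ∀ t ∈ I, ∃ s ∈ I, t < s)
    (hlift : ∀ s ∈ I, ∃ b, IsLiftOn f γ z₀ (Icc 0 s) b) : ∃ b, IsLiftOn f γ z₀ I b := by
  choose! L hL using hlift
  have hcoh : ∀ s ∈ I, ∀ t ∈ Icc 0 s, L t t = L s t := fun s hs t ht =>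
    ((hL s hs).mono (Icc_subset_Icc_right ht.2)).eqOn hf hz₀ hsing isPreconnected_Icc
      ⟨le_rfl, ht.1⟩ Icc_subset_Ici_self (hL t (hI.out hI₀ hs ht)) ⟨ht.1, le_rfl⟩ |>.symm
  refine ⟨fun t => L t t, fun t ht => ?_, (hL 0 hI₀).2.1,
    fun t ht => (hL t ht).2.2 t ⟨hIpos ht, le_rfl⟩⟩
  obtain ⟨s, hs, hts⟩ := hmax t ht
  have hnhds : I ∩ Iio s ∈ 𝓝[I] t := inter_mem_nhdsWithin I (Iio_mem_nhds hts)
  have hsub : I ∩ Iio s ⊆ Icc 0 s := fun u hu => ⟨hIpos hu.1, hu.2.le⟩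
  refine ((((hL s hs).1.mono hsub).continuousWithinAt ⟨ht, hts⟩).mono_of_mem_nhdsWithin
    hnhds).congr_of_eventuallyEq ?_ (hcoh s hs t ⟨hIpos ht, hts.le⟩)
  filter_upwards [hnhds] with u hu using hcoh s hs u (hsub hu)

end IsLiftOn

open IsLiftOn in
theorem exists_isLiftOn_Ici {f : ℂ → ℂ} {γ : ℝ → ℂ} {z₀ : ℂ} (hf : Differentiable ℂ f)
    (hγ : Continuous γ) (hz₀ : deriv f z₀ ≠ 0) (hfz₀ : f z₀ = γ 0)
    (hsing : ∀ t > 0, γ t ∉ singularValues f) : ∃ b, IsLiftOn f γ z₀ (Ici 0) b := by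
  set I := {T : ℝ | 0 ≤ T ∧ ∃ b, IsLiftOn f γ z₀ (Icc 0 T) b}
  have hI₀ : 0 ∈ I := ⟨le_rfl, fun _ => z₀, continuousOn_const, rfl,
    fun t ht => by rw [le_antisymm ht.2 ht.1, hfz₀]⟩
  have hI : I.OrdConnected := ⟨fun _ hx _ ⟨_, b, hb⟩ _ ht =>
    ⟨hx.1.trans ht.1, b, hb.mono (Icc_subset_Icc_right ht.2)⟩⟩
  have hmax : ∀ t ∈ I, ∃ s ∈ I, t < s := fun t ⟨ht, b, hb⟩ => by
    obtain ⟨u, hu, b', hb'⟩ := exists_extend hf hγ hz₀ hsing ht hb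
    exact ⟨u, ⟨ht.trans hu.le, b', hb'⟩, hu⟩
  obtain ⟨b, hb⟩ := exists_of_forall_Icc hf hz₀ hsing hI hI₀ (fun _ ht => ht.1) hmax
    (fun _ hs => hs.2)
  suffices Ici 0 ⊆ I from ⟨b, hb.mono this⟩
  intro T₀ hT₀
  by_contra hT₀I
  have hbdd : BddAbove I := ⟨T₀, fun t ht => not_lt.1 fun h => hT₀I (hI.out hI₀ ht ⟨hT₀, h.le⟩)⟩
  obtain ⟨s₀, hs₀, hs₀pos⟩ := hmax 0 hI₀
  have hT : 0 < sSup I := hs₀pos.trans_le (le_csSup hbdd hs₀)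
  have hIco : Ico 0 (sSup I) ⊆ I := fun t ht => by
    obtain ⟨s, hs, hts⟩ := exists_lt_of_lt_csSup ⟨0, hI₀⟩ ht.2
    exact hI.out hI₀ hs ⟨ht.1, hts.le⟩
  obtain ⟨b', hb'⟩ := (hb.mono hIco).exists_extend_endpoint hf hγ hsing hT
  obtain ⟨s, hs, hTs⟩ := hmax _ ⟨hT.le, b', hb'⟩
  exact (le_csSup hbdd hs).not_gt hTs

/-- Every leg has exactly one pullback leg under `f` (so the leg map
is well defined): there is a leg `β` with `f ∘ β = γ` on `[0,∞)`, unique as a curve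
on `[0,∞)`. -/
theorem leg_map_well_defined
    (f : ℂ → ℂ) (hf : EntireTranscendental f) (z0 : ℂ)
    (hz : RepellingOrParabolicFixedPt f z0) (U : Set ℂ)
    (hU : IsAdmissibleExpansionDomain f z0 U)
    (γ : ℝ → ℂ) (hγ : IsLeg z0 U γ) :
    ∃ β : ℝ → ℂ, (IsLeg z0 U β ∧ ∀ t ∈ Ici (0:ℝ), f (β t) = γ t) ∧
      ∀ β' : ℝ → ℂ, (IsLeg z0 U β' ∧ ∀ t ∈ Ici (0:ℝ), f (β' t) = γ t) →
        ∀ t ∈ Ici (0:ℝ), β' t = β t := by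
  obtain ⟨hγc, hγinj, hγ0, hγU, hγlim⟩ := hγ
  obtain ⟨-, -, hUP, -, hUinv, -⟩ := hU
  -- extended to negative times so as to be continuous on all of `ℝ`
  set γ' : ℝ → ℂ := fun t => γ (max t 0)
  have hγ'γ : ∀ t ∈ Ici (0:ℝ), γ' t = γ t := fun t ht => by simp [γ', max_eq_left (mem_Ici.1 ht)]
  have hsing : ∀ t > 0, γ' t ∉ singularValues f := fun t ht hS =>
    hUP (hγU t ht) (Or.inl (hγ'γ t ht.le ▸ singularValues_subset_postsingularSet f hS))
  obtain ⟨β, hβ⟩ := exists_isLiftOn_Ici (γ := γ') hf.1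
    (hγc.comp_continuous (by fun_prop) fun t => le_max_right t 0) hz.deriv_ne_zero
    (by simp [γ', hγ0, hz.1]) hsing
  have hlift : ∀ t ∈ Ici (0:ℝ), f (β t) = γ t := fun t ht => (hβ.2.2 t ht).trans (hγ'γ t ht)
  refine ⟨β, ⟨⟨hβ.1, (hγinj.congr fun t ht => (hlift t ht).symm).of_comp, hβ.2.1,
    fun t ht => hUinv.subset (show f (β t) ∈ U from hlift t ht.le ▸ hγU t ht),
    tendsto_norm_atTop_of_tendsto_norm_comp hf.1.continuous (hγlim.congr'
      ((eventually_ge_atTop 0).mono fun t ht => congrArg norm (hlift t ht).symm))⟩, hlift⟩, ?_⟩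
  rintro β' ⟨hβ', hβ'lift⟩
  exact hβ.eqOn hf.1 hz.deriv_ne_zero hsing isPreconnected_Ici self_mem_Ici subset_rfl
    ⟨hβ'.1, hβ'.2.2.1, fun t ht => (hβ'lift t ht).trans (hγ'γ t ht).symm⟩ |>.symm
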